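/- If a sequent Π_{Γ,Δ} ⊢ A⊗B (where Π_{Γ,Δ} is some permutation of the concatenation of Γ and Δ) is derivable in the system S, and the sequence Γ,A is prime to the sequence Δ,B, then both Γ ⊢ A and Δ ⊢ B are derivable in S. -/

import Mathlib

/-- Formulae of the system `S`: built from propositional letters and the constant `I`
(`unit`) with the binary connectives `⊗` (`tens`) and `→` (`imp`). -/
inductive Fml : Type
  | atom : ℕ → Fml
  | unit : Fml
  | tens : Fml → Fml → Fml
  | imp : Fml → Fml → Fml

/-- Derivability in the system `S`.  Sequents are `Γ ⊢ A` with `Γ` a finite list of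
formulae.  Axioms: `A ⊢ A` and `⊢ I`; structural rules: weakening, interchange and cut;
operational rules: `⊗⊢`, `⊢⊗`, `→⊢` and `⊢→`. -/
inductive SDeriv : List Fml → Fml → Prop
  | ax (A : Fml) : SDeriv [A] A
  | axI : SDeriv [] Fml.unit
  | weak {Γ A} : SDeriv Γ A → SDeriv (Fml.unit :: Γ) A
  | exch {Γ Δ : List Fml} {A B C} :
      SDeriv (Γ ++ A :: B :: Δ) C → SDeriv (Γ ++ B :: A :: Δ) C
  | cut {Γ Δ Θ : List Fml} {A B} :
      SDeriv Γ A → SDeriv (Δ ++ A :: Θ) B → SDeriv (Δ ++ Γ ++ Θ) B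
  | tensL {Γ Δ : List Fml} {A B C} :
      SDeriv (Γ ++ A :: B :: Δ) C → SDeriv (Γ ++ (A.tens B) :: Δ) C
  | tensR {Γ Δ : List Fml} {A B} :
      SDeriv Γ A → SDeriv Δ B → SDeriv (Γ ++ Δ) (A.tens B)
  | impL {Γ Δ : List Fml} {A B C} :
      SDeriv Γ A → SDeriv (B :: Δ) C → SDeriv (Γ ++ (A.imp B) :: Δ) C
  | impR {Γ : List Fml} {A B} :
      SDeriv (A :: Γ) B → SDeriv Γ (A.imp B)

/-- The propositional letter `p` occurs in the given formula. -/
def Fml.occurs (p : ℕ) : Fml → Prop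
  | .atom q => q = p
  | .unit => False
  | .tens A B => A.occurs p ∨ B.occurs p
  | .imp A B => A.occurs p ∨ B.occurs p

/-- `Γ` is prime to `Δ` when no propositional letter occurs both in a formula of `Γ`
and in a formula of `Δ`. -/
def PrimeTo (Γ Δ : List Fml) : Prop :=
  ∀ (p : ℕ), ∀ X ∈ Γ, ∀ Y ∈ Δ, X.occurs p → ¬Y.occurs p

/-!
Substitute `I` for every letter that does not occur in `Γ, A`. By primeness this fixes
`Γ` and `A` and turns `Δ` and `B` into closed (letter-free) formulae. A closed formula
is derivable from no premises and derives `I`, so it can be cut away on the left and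
discarded from `A ⊗ (closed)`; what remains is `Γ ⊢ A`. The other half follows
symmetrically, since `A ⊗ B ⊢ B ⊗ A`.
-/

def Fml.subst (σ : ℕ → Fml) : Fml → Fml
  | .atom p => σ p
  | .unit => .unit
  | .tens A B => .tens (A.subst σ) (B.subst σ)
  | .imp A B => .imp (A.subst σ) (B.subst σ)

def Fml.IsClosed (X : Fml) : Prop := ∀ p, ¬ X.occurs p

theorem PrimeTo.symm {Γ Δ : List Fml} (h : PrimeTo Γ Δ) : PrimeTo Δ Γ :=
  fun p Y hY X hX hYp hXp => h p X hX Y hY hXp hYp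

namespace Fml

theorem subst_eq_self {σ : ℕ → Fml} :
    ∀ {X : Fml}, (∀ p, X.occurs p → σ p = .atom p) → X.subst σ = X
  | .atom p, h => h p rfl
  | .unit, _ => rfl
  | .tens _ _, h | .imp _ _, h => by
      simp only [subst, subst_eq_self fun p hp => h p (Or.inl hp),
        subst_eq_self fun p hp => h p (Or.inr hp)]

theorem isClosed_subst {σ : ℕ → Fml} :
    ∀ {X : Fml}, (∀ p, X.occurs p → (σ p).IsClosed) → (X.subst σ).IsClosed
  | .atom p, h => h p rfl
  | .unit, _ => fun _ hq => hq
  | .tens _ _, h | .imp _ _, h => fun q hq =>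
      hq.elim (isClosed_subst (fun p hp => h p (Or.inl hp)) q)
        (isClosed_subst (fun p hp => h p (Or.inr hp)) q)

end Fml

namespace SDeriv

theorem append_perm {Θ Θ' : List Fml} (hp : Θ.Perm Θ') :
    ∀ {Γ C}, SDeriv (Γ ++ Θ) C → SDeriv (Γ ++ Θ') C := by
  induction hp with
  | nil => exact id
  | cons x _ ih => intro Γ C h; simpa using ih (Γ := Γ ++ [x]) (by simpa using h)
  | swap x y l => exact exch
  | trans _ _ ih₁ ih₂ => exact ih₂ ∘ ih₁

theorem perm {Θ Θ' : List Fml} {C : Fml} (hp : Θ.Perm Θ') (h : SDeriv Θ C) :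
    SDeriv Θ' C :=
  append_perm hp (Γ := []) h

theorem subst {Θ : List Fml} {C : Fml} (h : SDeriv Θ C) (σ : ℕ → Fml) :
    SDeriv (Θ.map (Fml.subst σ)) (C.subst σ) := by
  induction h with
  | ax A => exact ax _
  | axI => exact axI
  | weak _ ih => exact ih.weak
  | exch _ ih => simpa using exch (by simpa using ih)
  | cut _ _ ih₁ ih₂ => simpa using cut ih₁ (by simpa using ih₂)
  | tensL _ ih => simpa [Fml.subst] using tensL (by simpa using ih)
  | tensR _ _ ih₁ ih₂ => simpa [Fml.subst] using tensR ih₁ ih₂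
  | impL _ _ ih₁ ih₂ => simpa [Fml.subst] using impL ih₁ ih₂
  | impR _ ih => exact impR ih

theorem cut_head {Γ Θ : List Fml} {A C : Fml} (hA : SDeriv Γ A) (h : SDeriv (A :: Θ) C) :
    SDeriv (Γ ++ Θ) C := by
  simpa using cut (Δ := []) hA h

theorem tens_comm {Γ : List Fml} {A B : Fml} (h : SDeriv Γ (A.tens B)) :
    SDeriv Γ (B.tens A) := by
  have hBA : SDeriv [A, B] (B.tens A) := exch (Γ := []) (tensR (Γ := [B]) (ax B) (ax A))
  simpa using cut_head h (tensL (Γ := []) hBA)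

end SDeriv

namespace Fml.IsClosed

open SDeriv

theorem sDeriv_nil_and_unit :
    ∀ {X : Fml}, X.IsClosed → SDeriv [] X ∧ SDeriv [X] .unit
  | .atom p, h => absurd rfl (h p)
  | .unit, _ => ⟨axI, ax _⟩
  | .tens _ _, h => by
      obtain ⟨hA, hA'⟩ := sDeriv_nil_and_unit fun p hp => h p (Or.inl hp)
      obtain ⟨hB, hB'⟩ := sDeriv_nil_and_unit fun p hp => h p (Or.inr hp)
      exact ⟨tensR hA hB, tensL (Γ := []) (Δ := []) (by simpa using cut_head hA' hB'.weak)⟩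
  | .imp _ _, h => by
      obtain ⟨hA, hA'⟩ := sDeriv_nil_and_unit fun p hp => h p (Or.inl hp)
      obtain ⟨hB, hB'⟩ := sDeriv_nil_and_unit fun p hp => h p (Or.inr hp)
      exact ⟨impR (cut_head hA' hB.weak), by simpa using impL (Γ := []) hA hB'⟩

theorem sDeriv_nil {X : Fml} (h : X.IsClosed) : SDeriv [] X :=
  (sDeriv_nil_and_unit h).1

theorem sDeriv_cons {X : Fml} (h : X.IsClosed) {Θ : List Fml} {C : Fml}
    (hΘ : SDeriv Θ C) : SDeriv (X :: Θ) C :=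
  cut_head (sDeriv_nil_and_unit h).2 hΘ.weak

end Fml.IsClosed

namespace SDeriv

theorem of_closed_append {Ξ Γ : List Fml} {C : Fml} (hΞ : ∀ X ∈ Ξ, X.IsClosed)
    (h : SDeriv (Ξ ++ Γ) C) : SDeriv Γ C := by
  induction Ξ with
  | nil => exact h
  | cons X Ξ ih =>
      exact ih (fun Y hY => hΞ Y (by simp [hY]))
        (by simpa using cut_head (hΞ X (by simp)).sDeriv_nil h)

theorem left_of_tens_closed {Γ : List Fml} {A B : Fml} (h : SDeriv Γ (A.tens B))
    (hB : B.IsClosed) : SDeriv Γ A := by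
  have hAB : SDeriv [A, B] A := exch (Γ := []) (hB.sDeriv_cons (ax A))
  simpa using cut_head h (tensL (Γ := []) hAB)

theorem left_of_append_tens {Γ Ξ : List Fml} {A B : Fml} (h : SDeriv (Γ ++ Ξ) (A.tens B))
    (hprime : PrimeTo (Γ ++ [A]) (Ξ ++ [B])) : SDeriv Γ A := by
  classical
  let σ : ℕ → Fml := fun p => if ∃ X ∈ Γ ++ [A], X.occurs p then .atom p else .unit
  have hfix : ∀ X ∈ Γ ++ [A], X.subst σ = X := fun X hX =>
    Fml.subst_eq_self fun p hp => if_pos ⟨X, hX, hp⟩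
  have hclosed : ∀ Y ∈ Ξ ++ [B], (Y.subst σ).IsClosed := fun Y hY =>
    Fml.isClosed_subst fun p hp => by
      have hforeign : ¬ ∃ X ∈ Γ ++ [A], X.occurs p := fun ⟨X, hX, hXp⟩ =>
        hprime p X hX Y hY hXp hp
      simp only [σ, if_neg hforeign]
      exact fun _ h => h
  have hΓ : Γ.map (Fml.subst σ) = Γ := by
    simpa using List.map_congr_left (g := id) fun X hX => hfix X (by simp [hX])
  have hσ : SDeriv (Γ ++ Ξ.map (Fml.subst σ)) (A.tens (B.subst σ)) := by
    simpa [Fml.subst, hΓ, hfix A] using h.subst σ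
  refine left_of_tens_closed ?_ (hclosed B (by simp))
  refine of_closed_append ?_ (hσ.perm List.perm_append_comm)
  simp only [List.mem_map]
  rintro _ ⟨Y, hY, rfl⟩
  exact hclosed Y (by simp [hY])

end SDeriv

/-- If some permutation of `Γ, Δ` derives `A ⊗ B` in `S` and `Γ, A` is prime to
`Δ, B`, then `Γ ⊢ A` and `Δ ⊢ B` are derivable in `S`. -/
theorem tensor_splitting (Γ Δ Φ : List Fml) (A B : Fml)
    (hperm : Φ.Perm (Γ ++ Δ)) (h : SDeriv Φ (A.tens B))
    (hprime : PrimeTo (Γ ++ [A]) (Δ ++ [B])) :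
    SDeriv Γ A ∧ SDeriv Δ B := by
  have hΓΔ : SDeriv (Γ ++ Δ) (A.tens B) := h.perm hperm
  exact ⟨hΓΔ.left_of_append_tens hprime,
    (hΓΔ.tens_comm.perm List.perm_append_comm).left_of_append_tens hprime.symm⟩
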